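/- arXiv:2406.02238 — 4 statements merged into one kernel-verified Lean document; each statement's English description precedes it below -/
import Mathlib

section
/- Let $S \subseteq \mathbb{F}_q[X]^b$ be an $\mathbb{F}_q$-linear subspace of tuples of polynomials each of degree less than $k$, and let $D = \dim_{\mathbb{F}_q(X)} \operatorname{span}_{\mathbb{F}_q(X)}(S)$. If $\alpha$ is sampled uniformly from $\mathbb{F}_q$, then with probability at least $1 - Dk/q$, the image of $S$ under the evaluation map $(P_1, \ldots, P_b) \mapsto (P_1(\alpha), \ldots, P_b(\alpha))$ has $\mathbb{F}_q$-dimension exactly $D$. -/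
/-!
Pick `p₁, …, p_D ∈ S` whose images form a basis of the `RatFunc F`-span; some `D × D` minor of
the polynomial matrix `(p_j i)` then has nonzero determinant `P`, a polynomial of degree at most
`Dk`. At every `α` that is not a root of `P`, the evaluated minor is still invertible, so the
image of `S` has dimension at least `D`. Conversely, `F`-independent evaluations at any `α` are
witnessed by a minor that is nonzero at `α`, hence nonzero as a polynomial, so the corresponding
elements of `S` are `RatFunc F`-independent: the dimension never exceeds `D`.
-/

/-- Evaluation at `α`, as an `F`-linear map on `b`-tuples of polynomials. -/
def evalMap (F : Type) [CommSemiring F] (b : ℕ) (α : F) :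
    (Fin b → Polynomial F) →ₗ[F] (Fin b → F) where
  toFun v i := (v i).eval α
  map_add' u v := by funext i; simp
  map_smul' c v := by funext i; simp

open Module Submodule

section LinearAlgebra

variable {K V : Type*} [DivisionRing K] [AddCommGroup V] [Module K V]

theorem exists_linearIndependent_fin_of_le_finrank_span [Module.Finite K V] {s : Set V} {n : ℕ}
    (hn : n ≤ finrank K (span K s)) :
    ∃ u : Fin n → V, (∀ j, u j ∈ s) ∧ LinearIndependent K u := by
  obtain ⟨t, hts, hspan, hind⟩ := exists_linearIndependent K s
  have : Fintype t := @Fintype.ofFinite _ hind.finite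
  have hcard : finrank K (span K s) = Fintype.card t := by
    rw [← hspan, ← finrank_span_eq_card hind, Subtype.range_coe]
  let e : Fin n ↪ t := (Fin.castLEEmb (hcard ▸ hn)).trans (Fintype.equivFin t).symm.toEmbedding
  exact ⟨fun j => e j, fun j => hts (e j).2, hind.comp e e.injective⟩

theorem LinearIndependent.card_le_finrank_of_forall_mem {ι : Type*} [Fintype ι]
    {U : Submodule K V} [Module.Finite K U] {u : ι → V} (hu : LinearIndependent K u)
    (hmem : ∀ j, u j ∈ U) :
    Fintype.card ι ≤ finrank K U :=
  finrank_span_eq_card hu ▸ Submodule.finrank_mono (span_le.mpr (Set.range_subset_iff.mpr hmem))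

theorem linearIndependent_iff_exists_det_submatrix_ne_zero {K : Type*} [Field K] {n b : ℕ}
    (u : Fin n → Fin b → K) :
    LinearIndependent K u ↔
      ∃ c : Fin n → Fin b, ((Matrix.of u).submatrix id c).det ≠ 0 := by
  constructor
  · intro hu
    have hcols : finrank K (span K (Set.range (Matrix.of u).col)) = n := by
      rw [← Matrix.rank_eq_finrank_span_cols]
      exact (hu.rank_matrix).trans (Fintype.card_fin n)
    obtain ⟨w, hw, hwind⟩ := exists_linearIndependent_fin_of_le_finrank_span hcols.ge
    choose c hc using hw
    have hcols_eq : ((Matrix.of u).submatrix id c).col = w := funext hc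
    rw [← hcols_eq, Matrix.linearIndependent_cols_iff_isUnit,
      Matrix.isUnit_iff_isUnit_det] at hwind
    exact ⟨c, hwind.ne_zero⟩
  · rintro ⟨c, hc⟩
    exact LinearIndependent.of_comp (LinearMap.funLeft K K c)
      (Matrix.linearIndependent_rows_of_det_ne_zero hc)

end LinearAlgebra

section RingHom

variable {R K L : Type*} [CommRing R] [Field K] [Field L] {n b : ℕ}

theorem linearIndependent_map_iff_exists_map_det_ne_zero (f : R →+* K)
    (v : Fin n → Fin b → R) :
    LinearIndependent K (fun j i => f (v j i)) ↔
      ∃ c : Fin n → Fin b, f ((Matrix.of v).submatrix id c).det ≠ 0 := by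
  rw [linearIndependent_iff_exists_det_submatrix_ne_zero]
  exact exists_congr fun c => by rw [RingHom.map_det]; rfl

theorem linearIndependent_map_of_injective {f : R →+* K} (hf : Function.Injective f)
    (g : R →+* L) {v : Fin n → Fin b → R} (hg : LinearIndependent L (fun j i => g (v j i))) :
    LinearIndependent K (fun j i => f (v j i)) := by
  obtain ⟨c, hc⟩ := (linearIndependent_map_iff_exists_map_det_ne_zero g v).mp hg
  refine (linearIndependent_map_iff_exists_map_det_ne_zero f v).mpr ⟨c, ?_⟩
  rw [map_ne_zero_iff f hf]
  exact fun h => hc (by rw [h, map_zero])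

theorem finrank_span_image_le_of_injective {f : R →+* K} (hf : Function.Injective f)
    (g : R →+* L) (s : Set (Fin b → R)) :
    finrank L (span L ((fun v i => g (v i)) '' s)) ≤
      finrank K (span K ((fun v i => f (v i)) '' s)) := by
  obtain ⟨u, hus, hu⟩ := exists_linearIndependent_fin_of_le_finrank_span
    (le_refl (finrank L (span L ((fun v i => g (v i)) '' s))))
  choose v hvs hvu using hus
  have hv : LinearIndependent L (fun j i => g (v j i)) := by
    rwa [show (fun j i => g (v j i)) = u from funext hvu]
  simpa using (linearIndependent_map_of_injective hf g hv).card_le_finrank_of_forall_mem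
    fun j => subset_span (Set.mem_image_of_mem (fun v i => f (v i)) (hvs j))

end RingHom

theorem Polynomial.natDegree_det_le {R ι : Type*} [CommRing R] [Fintype ι] [DecidableEq ι]
    (M : Matrix ι ι (Polynomial R)) {m : ℕ} (h : ∀ i j, (M i j).natDegree ≤ m) :
    M.det.natDegree ≤ Fintype.card ι * m := by
  rw [Matrix.det_apply]
  refine Polynomial.natDegree_sum_le_of_forall_le _ _ fun σ _ => ?_
  rw [Units.smul_def, zsmul_eq_mul]
  refine Polynomial.natDegree_mul_le.trans ?_
  rw [Polynomial.natDegree_intCast, zero_add]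
  refine (Polynomial.natDegree_prod_le _ _).trans ?_
  simpa using Finset.sum_le_sum fun j (_ : j ∈ Finset.univ) => h (σ j) j

theorem Polynomial.card_le_card_filter_add_natDegree {F : Type*} [Field F] [Fintype F]
    {P : Polynomial F} (hP : P ≠ 0) (p : F → Prop) [DecidablePred p]
    (hp : ∀ α, P.eval α ≠ 0 → p α) :
    Fintype.card F ≤ (Finset.univ.filter p).card + P.natDegree := by
  classical
  have hroots : (Finset.univ.filter fun α => P.eval α = 0).card ≤ P.natDegree :=
    Polynomial.card_le_degree_of_subset_roots fun α hα =>
      (Polynomial.mem_roots hP).mpr (Finset.mem_filter.mp hα).2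
  have hgood :
      (Finset.univ.filter fun α => P.eval α ≠ 0).card ≤ (Finset.univ.filter p).card :=
    Finset.card_le_card (Finset.monotone_filter_right _ fun α _ => hp α)
  calc Fintype.card F
      = (Finset.univ.filter fun α => P.eval α ≠ 0).card +
          (Finset.univ.filter fun α => P.eval α = 0).card := by
        rw [add_comm, Finset.card_filter_add_card_filter_not, Finset.card_univ]
    _ ≤ (Finset.univ.filter p).card + P.natDegree := add_le_add hgood hroots

theorem finrank_map_evalMap_le {F : Type} [Field F] {b : ℕ}
    (S : Submodule F (Fin b → Polynomial F)) (α : F) :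
    finrank F (S.map (evalMap F b α)) ≤
      finrank (RatFunc F) (span (RatFunc F)
        ((fun v i => algebraMap (Polynomial F) (RatFunc F) (v i)) ''
          (S : Set (Fin b → Polynomial F)))) := by
  have hmap : S.map (evalMap F b α) = span F
      ((fun v i => Polynomial.evalRingHom α (v i)) '' (S : Set (Fin b → Polynomial F))) := by
    rw [← span_eq S, ← span_image, span_eq]; rfl
  rw [hmap]
  exact finrank_span_image_le_of_injective (IsFractionRing.injective _ _) _ _

open scoped Classical in
theorem stmt7 (F : Type) [Field F] [Fintype F] (q b k D : ℕ)
    (hq : Fintype.card F = q)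
    (S : Submodule F (Fin b → Polynomial F))
    (hdeg : ∀ v ∈ S, ∀ i, (v i).degree < (k : ℕ))
    (hD : D = Module.finrank (RatFunc F) ↥(Submodule.span (RatFunc F)
      ((fun (v : Fin b → Polynomial F) (i : Fin b) =>
          algebraMap (Polynomial F) (RatFunc F) (v i)) '' (S : Set (Fin b → Polynomial F))))) :
    1 - (D * k : ℝ) / (q : ℝ) ≤
      ((Finset.univ.filter fun α : F =>
          Module.finrank F ↥(S.map (evalMap F b α)) = D).card : ℝ) / (q : ℝ) := by
  have hupper (α : F) : finrank F (S.map (evalMap F b α)) ≤ D :=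
    (finrank_map_evalMap_le S α).trans_eq hD.symm
  obtain ⟨w, hwS, hw⟩ := exists_linearIndependent_fin_of_le_finrank_span hD.le
  choose p hpS hpw using hwS
  have hp : LinearIndependent (RatFunc F)
      fun j i => algebraMap (Polynomial F) (RatFunc F) (p j i) := by
    rwa [show (fun j i => algebraMap (Polynomial F) (RatFunc F) (p j i)) = w from funext hpw]
  obtain ⟨c, hc⟩ := (linearIndependent_map_iff_exists_map_det_ne_zero _ p).mp hp
  set P := ((Matrix.of p).submatrix id c).det
  have hP0 : P ≠ 0 := fun h => hc (by rw [h, map_zero])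
  have hPdeg : P.natDegree ≤ D * k := by
    have := Polynomial.natDegree_det_le ((Matrix.of p).submatrix id c) fun j j' =>
      Polynomial.natDegree_le_of_degree_le (hdeg (p j) (hpS j) (c j')).le
    rwa [Fintype.card_fin] at this
  have hgood (α : F) (hα : P.eval α ≠ 0) : finrank F (S.map (evalMap F b α)) = D := by
    refine le_antisymm (hupper α) ?_
    have hind := (linearIndependent_map_iff_exists_map_det_ne_zero
      (Polynomial.evalRingHom α) p).mpr ⟨c, hα⟩
    simpa using hind.card_le_finrank_of_forall_mem
      fun j => Submodule.mem_map_of_mem (f := evalMap F b α) (hpS j)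
  have hcount := Polynomial.card_le_card_filter_add_natDegree hP0 _ hgood
  have hq0 : (0 : ℝ) < q := by exact_mod_cast hq ▸ Fintype.card_pos
  rw [sub_le_iff_le_add, ← add_div, le_div_iff₀ hq0, one_mul]
  exact_mod_cast hq ▸ hcount.trans (Nat.add_le_add_left hPdeg _)
end

section
/- Let $U \subseteq \mathbb{F}_q(X)^b$ be an $\mathbb{F}_q(X)$-linear subspace of dimension $D_U$ that is spanned (over $\mathbb{F}_q(X)$) by vectors whose entries are polynomials in $\mathbb{F}_q[X]$ of degree at most $k$. Then there exists a matrix $Z \in \mathbb{F}_q(X)^{(b - D_U) \times b}$ with $\ker Z = U$ (viewing $Z$ as a linear map $\mathbb{F}_q(X)^b \to \mathbb{F}_q(X)^{b - D_U}$) such that every entry of $Z$ is a polynomial in $\mathbb{F}_q[X]$ of degree at most $D_U \cdot k$. -/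
/-!
Take a basis `v₁, …, v_d` of `U` among the given polynomial spanning vectors, and let `M` be the
`d × b` polynomial matrix with these rows. Since `M` has rank `d`, some `d` columns form an
invertible block `A`; write (after reordering columns) `M = [A | B]`. The rows of
`[-(adj A · B)ᵀ | det A · 1]` are orthogonal to the rows of `M` because `A · adj A = det A · 1`,
and they are independent because of the block `det A · 1`, so they cut out exactly `U`. Every
entry is `0`, `det A`, or, by Cramer's rule, a `d × d` minor of `M`, hence a polynomial of degree
at most `d k`.
-/

open Polynomial

theorem Function.Injective.exists_sumEquiv_comp_inl {α β γ : Type*} [Fintype α] [Fintype β]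
    [Fintype γ] {g : α → γ} (hg : Function.Injective g)
    (h : Fintype.card α + Fintype.card β = Fintype.card γ) :
    ∃ σ : α ⊕ β ≃ γ, σ ∘ Sum.inl = g := by
  classical
  let e : β ≃ ↥(Set.range g)ᶜ := Fintype.equivOfCardEq <| by
    rw [Fintype.card_compl_set, Set.card_range_of_injective hg]; omega
  exact ⟨(Equiv.sumCongr (Equiv.ofInjective g hg) e).trans (Equiv.Set.sumCompl _), by ext; simp⟩

namespace Matrix

variable {m n p R : Type*} [Fintype m] [DecidableEq m]

theorem natDegree_det_le [CommRing R] {k : ℕ} (P : Matrix m m R[X])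
    (h : ∀ i j, (P i j).natDegree ≤ k) :
    P.det.natDegree ≤ Fintype.card m * k := by
  rw [det_apply]
  refine natDegree_sum_le_of_forall_le _ _ fun τ _ => (natDegree_smul_le _ _).trans ?_
  calc (∏ i, P (τ i) i).natDegree ≤ ∑ i, (P (τ i) i).natDegree := natDegree_prod_le _ _
    _ ≤ ∑ _i : m, k := Finset.sum_le_sum fun i _ => h _ _
    _ = Fintype.card m * k := by simp

theorem exists_injective_det_submatrix_ne_zero [Fintype n] {K : Type*} [Field K]
    (M : Matrix m n K) (hM : LinearIndependent K M.row) :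
    ∃ g : m → n, Function.Injective g ∧ (M.submatrix id g).det ≠ 0 := by
  obtain ⟨κ, a, ha, hspan, hli⟩ := exists_linearIndependent' K M.col
  have hcols : Submodule.span K (Set.range M.col) = ⊤ := by
    apply Submodule.eq_top_of_finrank_eq
    rw [← rank_eq_finrank_span_cols, hM.rank_matrix, Module.finrank_fintype_fun_eq_card]
  have : Fintype κ := Fintype.ofInjective a ha
  have hcard : Fintype.card m = Fintype.card κ := by
    rw [linearIndependent_iff_card_eq_finrank_span.mp hli, Set.finrank, hspan, hcols,
      finrank_top, Module.finrank_fintype_fun_eq_card]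
  let e : m ≃ κ := Fintype.equivOfCardEq hcard
  refine ⟨a ∘ e, ha.comp e.injective, ?_⟩
  have hA : LinearIndependent K (M.submatrix id (a ∘ e)).col := hli.comp e e.injective
  exact ((isUnit_iff_isUnit_det _).mp (linearIndependent_cols_iff_isUnit.mp hA)).ne_zero

variable [DecidableEq p]

/-- Writing the columns of `M`, reordered by `σ`, as `[A | B]`, this is
`[-(adj A * B)ᵀ | det A • 1]` with its columns put back in place: the matrix `[-(A⁻¹ * B)ᵀ | 1]`
with the denominator `det A` cleared. -/
def nullspaceMatrix [CommRing R] (M : Matrix m n R) (σ : m ⊕ p ≃ n) : Matrix p n R :=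
  (fromCols (-((M.submatrix id (σ ∘ Sum.inl)).adjugate * M.submatrix id (σ ∘ Sum.inr))ᵀ)
    ((M.submatrix id (σ ∘ Sum.inl)).det • 1)).submatrix id σ.symm

theorem map_nullspaceMatrix {S : Type*} [CommRing R] [CommRing S] (f : R →+* S)
    (M : Matrix m n R) (σ : m ⊕ p ≃ n) :
    (M.map f).nullspaceMatrix σ = (M.nullspaceMatrix σ).map f := by
  rw [nullspaceMatrix, submatrix_map, submatrix_map, ← RingHom.mapMatrix_apply,
    ← RingHom.map_adjugate, ← RingHom.map_det]
  ext r c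
  obtain ⟨c, rfl⟩ := σ.surjective c
  rcases c with t | t
  · simp [nullspaceMatrix, mul_apply]
  · simp [nullspaceMatrix, one_apply, apply_ite f]

theorem mul_transpose_nullspaceMatrix [Fintype n] [Fintype p] [CommRing R] (M : Matrix m n R)
    (σ : m ⊕ p ≃ n) :
    M * (M.nullspaceMatrix σ)ᵀ = 0 := by
  unfold nullspaceMatrix
  set A := M.submatrix id (σ ∘ Sum.inl)
  set B := M.submatrix id (σ ∘ Sum.inr)
  have hM : M.submatrix id σ = fromCols A B := by ext i (t | t) <;> rfl
  have hreindex : ∀ N : Matrix (m ⊕ p) p R, M * N.submatrix σ.symm id = M.submatrix id σ * N :=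
    fun N => by simpa using (submatrix_mul_equiv M (N.submatrix σ.symm id) id σ id).symm
  rw [transpose_submatrix, transpose_fromCols, hreindex, hM, fromCols_mul_fromRows, transpose_neg,
    transpose_transpose, transpose_smul, transpose_one, Matrix.mul_neg, ← Matrix.mul_assoc,
    mul_adjugate, Matrix.mul_smul, Matrix.mul_one, Matrix.smul_mul, Matrix.one_mul, neg_add_cancel]

theorem natDegree_nullspaceMatrix_le [CommRing R] {k : ℕ} (M : Matrix m n R[X])
    (σ : m ⊕ p ≃ n) (h : ∀ i j, (M i j).natDegree ≤ k) (r : p) (c : n) :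
    (M.nullspaceMatrix σ r c).natDegree ≤ Fintype.card m * k := by
  obtain ⟨c, rfl⟩ := σ.surjective c
  rcases c with t | t
  · have hentry : M.nullspaceMatrix σ r (σ (Sum.inl t)) =
        -cramer (M.submatrix id (σ ∘ Sum.inl)) (fun i => M i (σ (Sum.inr r))) t := by
      simp only [nullspaceMatrix, submatrix_apply, id, Equiv.symm_apply_apply,
        cramer_eq_adjugate_mulVec]
      rfl
    rw [hentry, natDegree_neg, cramer_apply]
    refine natDegree_det_le _ fun i j => ?_
    rw [updateCol_apply]
    split_ifs <;> exact h _ _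
  · simp only [nullspaceMatrix, submatrix_apply, id, Equiv.symm_apply_apply, fromCols_apply_inr,
      smul_apply, one_apply, smul_eq_mul, mul_ite, mul_one, mul_zero]
    split_ifs
    · exact natDegree_det_le _ fun i j => h _ _
    · simp

section Field

variable {K : Type*} [Field K] [Fintype n] [Fintype p]

theorem rank_nullspaceMatrix (M : Matrix m n K) (σ : m ⊕ p ≃ n)
    (hA : (M.submatrix id (σ ∘ Sum.inl)).det ≠ 0) :
    (M.nullspaceMatrix σ).rank = Fintype.card p := by
  refine le_antisymm (rank_le_card_height _) ?_
  have hblock : (M.nullspaceMatrix σ).submatrix id (σ ∘ Sum.inr) =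
      (M.submatrix id (σ ∘ Sum.inl)).det • 1 := by
    ext; simp [nullspaceMatrix]
  calc Fintype.card p = ((M.submatrix id (σ ∘ Sum.inl)).det • (1 : Matrix p p K)).rank := by
        rw [rank_smul_of_mem_nonZeroDivisors _ (mem_nonZeroDivisors_of_ne_zero hA), rank_one]
    _ ≤ _ := hblock ▸ rank_submatrix_le _ _ _

theorem ker_mulVecLin_nullspaceMatrix (M : Matrix m n K) (σ : m ⊕ p ≃ n)
    (hA : (M.submatrix id (σ ∘ Sum.inl)).det ≠ 0) :
    LinearMap.ker (M.nullspaceMatrix σ).mulVecLin = Submodule.span K (Set.range M.row) := by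
  have hle : Submodule.span K (Set.range M.row) ≤
      LinearMap.ker (M.nullspaceMatrix σ).mulVecLin := by
    rw [Submodule.span_le]
    rintro _ ⟨i, rfl⟩
    ext r
    simpa [mulVec, dotProduct, mul_apply, mul_comm] using
      congrFun₂ (mul_transpose_nullspaceMatrix M σ) i r
  have hrank : M.rank = Fintype.card m := by
    refine le_antisymm (rank_le_card_height _) ?_
    calc Fintype.card m = (M.submatrix id (σ ∘ Sum.inl)).rank := (rank_of_det_ne_zero hA).symm
      _ ≤ M.rank := rank_submatrix_le _ _ _
  have hcard : Fintype.card n = Fintype.card m + Fintype.card p := by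
    rw [← Fintype.card_sum, Fintype.card_congr σ]
  have hker := LinearMap.finrank_range_add_finrank_ker (M.nullspaceMatrix σ).mulVecLin
  rw [← rank, rank_nullspaceMatrix M σ hA, Module.finrank_fintype_fun_eq_card] at hker
  refine (Submodule.eq_of_le_of_finrank_le hle ?_).symm
  rw [← rank_eq_finrank_span_row, hrank]
  omega

end Field

end Matrix

theorem stmt8_general (F : Type) [Field F] (b k DU : ℕ)
    (U : Submodule (RatFunc F) (Fin b → RatFunc F))
    (hDU : Module.finrank (RatFunc F) ↥U = DU)
    (hspan : ∃ T : Set (Fin b → RatFunc F), Submodule.span (RatFunc F) T = U ∧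
      ∀ v ∈ T, ∀ i, ∃ p : Polynomial F, p.degree ≤ (k : ℕ) ∧
        v i = algebraMap (Polynomial F) (RatFunc F) p) :
    ∃ Z : Matrix (Fin (b - DU)) (Fin b) (RatFunc F),
      LinearMap.ker Z.mulVecLin = U ∧
      ∀ i j, ∃ p : Polynomial F, p.degree ≤ (DU * k : ℕ) ∧
        Z i j = algebraMap (Polynomial F) (RatFunc F) p := by
  obtain ⟨T, rfl, hT⟩ := hspan
  subst hDU
  set d := Module.finrank (RatFunc F) (Submodule.span (RatFunc F) T)
  have hdb : d ≤ b := by simpa using (Submodule.span (RatFunc F) T).finrank_le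
  obtain ⟨v, hvT, hv_span, hv_li⟩ := Submodule.exists_fun_fin_finrank_span_eq (RatFunc F) T
  choose P hP_deg hP using fun i j => hT _ (hvT i) j
  have hPv : (Matrix.of P).map (algebraMap F[X] (RatFunc F)) = Matrix.of v := by
    ext i j; exact (hP i j).symm
  obtain ⟨g, hg, hdet⟩ := (Matrix.of v).exists_injective_det_submatrix_ne_zero hv_li
  obtain ⟨σ, rfl⟩ := hg.exists_sumEquiv_comp_inl (β := Fin (b - d))
    (by simpa using Nat.add_sub_cancel' hdb)
  refine ⟨((Matrix.of P).nullspaceMatrix σ).map (algebraMap _ _), ?_, fun r c => ⟨_, ?_, rfl⟩⟩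
  · rw [← Matrix.map_nullspaceMatrix, hPv, Matrix.ker_mulVecLin_nullspaceMatrix _ _ hdet]
    exact hv_span
  · rw [← natDegree_le_iff_degree_le]
    simpa using (Matrix.of P).natDegree_nullspaceMatrix_le σ
      (fun i j => natDegree_le_iff_degree_le.mpr (hP_deg i j)) r c

theorem stmt8 (F : Type) [Field F] [Fintype F] (b k DU : ℕ)
    (U : Submodule (RatFunc F) (Fin b → RatFunc F))
    (hDU : Module.finrank (RatFunc F) ↥U = DU)
    (hspan : ∃ T : Set (Fin b → RatFunc F), Submodule.span (RatFunc F) T = U ∧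
      ∀ v ∈ T, ∀ i, ∃ p : Polynomial F, p.degree ≤ (k : ℕ) ∧
        v i = algebraMap (Polynomial F) (RatFunc F) p) :
    ∃ Z : Matrix (Fin (b - DU)) (Fin b) (RatFunc F),
      LinearMap.ker Z.mulVecLin = U ∧
      ∀ i j, ∃ p : Polynomial F, p.degree ≤ (DU * k : ℕ) ∧
        Z i j = algebraMap (Polynomial F) (RatFunc F) p :=
  stmt8_general F b k DU U hDU hspan
end

section
/- Define $\mathcal{V} \in \mathcal{L}(\mathbb{F}_q^2)^n$ (with $n$ even) by $\mathcal{V}_i = \mathbb{F}_q^2$ for $1 \leq i \leq n/2$ and $\mathcal{V}_i = \{x \in \mathbb{F}_q^2 : x_1 = x_2\}$ for $n/2 < i \leq n$. Let $\mathcal{C} = \ker P \subseteq \mathbb{F}_q^n$ where $P \in \mathbb{F}_q^{(2n/3) \times n}$ is uniformly random. Then the probability that $\mathcal{C}$ contains a matrix $A \in \mathbb{F}_q^{n \times 2}$ (both columns in $\mathcal{C}$) with row span equal to $\mathbb{F}_q^2$ and with the $i$-th row of $A$ in $\mathcal{V}_i$ for all $i$, is at most $q^{-n/6}$. -/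
open scoped Classical

/-- Cardinality of a hyperplane `{v | v ⬝ᵥ u = 0}` is at most `q^(n-1)` for `u ≠ 0`. -/
lemma hyper_card {F : Type} [Field F] [Fintype F] {n : ℕ} (u : Fin n → F) (hu : u ≠ 0) :
    Fintype.card {v : Fin n → F // dotProduct v u = 0}
      ≤ Fintype.card F ^ (n - 1) := by
  obtain ⟨j, hj⟩ : ∃ j, u j ≠ 0 := by
    by_contra h; push_neg at h; exact hu (funext h)
  have hinj : Function.Injective
      (fun v : {v : Fin n → F // dotProduct v u = 0} =>
        (fun i : {i : Fin n // i ≠ j} => v.1 i.1)) := by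
    rintro ⟨v, hv⟩ ⟨w, hw⟩ h
    simp only [Subtype.mk.injEq]
    have hoff : ∀ i, i ≠ j → v i = w i := fun i hi => congrFun h ⟨i, hi⟩
    funext i
    rcases eq_or_ne i j with rfl | hij
    · have hd : dotProduct (v - w) u = 0 := by
        rw [sub_dotProduct, hv, hw, sub_zero]
      have hsum : ∑ l, (v - w) l * u l = 0 := hd
      rw [Finset.sum_eq_single i (fun l _ hl => by
          simp [sub_eq_zero.mpr (hoff l hl)]) (by simp)] at hsum
      have hvw : v i - w i = 0 := by
        rcases mul_eq_zero.mp hsum with h' | h'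
        · exact h'
        · exact absurd h' hj
      exact sub_eq_zero.mp hvw
    · exact hoff i hij
  calc Fintype.card {v : Fin n → F // dotProduct v u = 0}
      ≤ Fintype.card ({i : Fin n // i ≠ j} → F) := Fintype.card_le_of_injective _ hinj
    _ = Fintype.card F ^ (n - 1) := by
        rw [Fintype.card_fun, Fintype.card_subtype_compl, Fintype.card_subtype_eq,
          Fintype.card_fin]

/-- Number of `m × n` matrices killing a fixed nonzero vector `u`. -/
lemma matcount {F : Type} [Field F] [Fintype F] {m n : ℕ} (u : Fin n → F) (hu : u ≠ 0) :
    (Finset.univ.filter fun P : Matrix (Fin m) (Fin n) F => P.mulVec u = 0).card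
      ≤ Fintype.card F ^ (m * (n - 1)) := by
  rw [← Fintype.card_subtype]
  have hinj : Function.Injective
      (fun P : {P : Matrix (Fin m) (Fin n) F // P.mulVec u = 0} =>
        (fun i : Fin m => (⟨P.1 i, congrFun P.2 i⟩ :
          {v : Fin n → F // dotProduct v u = 0}))) := by
    rintro ⟨P, hP⟩ ⟨Q, hQ⟩ h
    simp only [Subtype.mk.injEq]
    funext i j
    have := congrFun h i
    exact congrFun (congrArg Subtype.val this) j
  calc Fintype.card {P : Matrix (Fin m) (Fin n) F // P.mulVec u = 0}
      ≤ Fintype.card (Fin m → {v : Fin n → F // dotProduct v u = 0}) :=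
        Fintype.card_le_of_injective _ hinj
    _ = Fintype.card {v : Fin n → F // dotProduct v u = 0} ^ m := by
        rw [Fintype.card_fun, Fintype.card_fin]
    _ ≤ (Fintype.card F ^ (n - 1)) ^ m := Nat.pow_le_pow_left (hyper_card u hu) m
    _ = Fintype.card F ^ (m * (n - 1)) := by rw [← pow_mul, Nat.mul_comm]

/-- Vectors supported on coordinates `< t`. -/
lemma usub_card {F : Type} [Field F] [Fintype F] {n t : ℕ} (ht : t ≤ n) :
    (Finset.univ.filter fun u : Fin n → F => ∀ i : Fin n, t ≤ (i : ℕ) → u i = 0).card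
      ≤ Fintype.card F ^ t := by
  rw [← Fintype.card_subtype]
  have hinj : Function.Injective
      (fun u : {u : Fin n → F // ∀ i : Fin n, t ≤ (i : ℕ) → u i = 0} =>
        (fun i : Fin t => u.1 ⟨i, lt_of_lt_of_le i.2 ht⟩)) := by
    rintro ⟨u, hu⟩ ⟨v, hv⟩ h
    simp only [Subtype.mk.injEq]
    funext i
    rcases lt_or_ge (i : ℕ) t with hi | hi
    · exact congrFun h ⟨(i : ℕ), hi⟩
    · rw [hu i hi, hv i hi]
  calc Fintype.card {u : Fin n → F // ∀ i : Fin n, t ≤ (i : ℕ) → u i = 0}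
      ≤ Fintype.card (Fin t → F) := Fintype.card_le_of_injective _ hinj
    _ = Fintype.card F ^ t := by rw [Fintype.card_fun, Fintype.card_fin]

open scoped Classical in
theorem stmt11 (F : Type) [Field F] [Fintype F] (q n : ℕ)
    (hq : Fintype.card F = q) (hn : 6 ∣ n) (hn0 : 0 < n) :
    ((Finset.univ.filter fun P : Matrix (Fin (2 * n / 3)) (Fin n) F =>
          ∃ A : Matrix (Fin n) (Fin 2) F,
            P * A = 0 ∧
            Submodule.span F (Set.range fun i : Fin n => A i) = ⊤ ∧
            ∀ i : Fin n, n / 2 ≤ (i : ℕ) → A i 0 = A i 1).card : ℝ) /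
        (Fintype.card (Matrix (Fin (2 * n / 3)) (Fin n) F) : ℝ) ≤
      (q : ℝ) ^ (-((n / 6 : ℕ) : ℤ)) := by
  obtain ⟨k, hk⟩ := hn
  have hk1 : 1 ≤ k := by omega
  have hm : 2 * n / 3 = 4 * k := by omega
  have hn2 : n / 2 = 3 * k := by omega
  have hn6 : n / 6 = k := by omega
  have h6k : 1 ≤ 6 * k := by omega
  have hnk1 : n - 1 ≤ 6 * k - 1 := by omega
  have hq1 : 1 ≤ q := hq ▸ Fintype.card_pos
  have hq0 : (0 : ℝ) < (q : ℝ) := by exact_mod_cast Nat.lt_of_lt_of_le Nat.zero_lt_one hq1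
  set U : Finset (Fin n → F) :=
    Finset.univ.filter
      (fun u : Fin n → F => u ≠ 0 ∧ ∀ i : Fin n, n / 2 ≤ (i : ℕ) → u i = 0) with hUdef
  -- Step 1: the event implies the existence of a nonzero kernel vector supported low
  have hsub : (Finset.univ.filter fun P : Matrix (Fin (2 * n / 3)) (Fin n) F =>
        ∃ A : Matrix (Fin n) (Fin 2) F,
          P * A = 0 ∧
          Submodule.span F (Set.range fun i : Fin n => A i) = ⊤ ∧
          ∀ i : Fin n, n / 2 ≤ (i : ℕ) → A i 0 = A i 1) ⊆
      U.biUnion (fun u => Finset.univ.filter fun P : Matrix (Fin (2 * n / 3)) (Fin n) F =>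
        P.mulVec u = 0) := by
    intro P hP
    rw [Finset.mem_filter] at hP
    obtain ⟨-, A, hPA, hspan, hdiag⟩ := hP
    have hmv : ∀ i : Fin n, A.mulVec ![1, -1] i = A i 0 - A i 1 := by
      intro i
      simp [Matrix.mulVec, dotProduct, Fin.sum_univ_two, sub_eq_add_neg]
    refine Finset.mem_biUnion.mpr ⟨A.mulVec ![1, -1], ?_, ?_⟩
    · rw [hUdef, Finset.mem_filter]
      refine ⟨Finset.mem_univ _, ?_, ?_⟩
      · -- nonzero
        intro h0
        have heq : ∀ i, A i 0 = A i 1 := by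
          intro i
          have := congrFun h0 i
          rw [hmv i] at this
          exact sub_eq_zero.mp this
        have hle : Submodule.span F (Set.range fun i : Fin n => A i) ≤
            LinearMap.ker ((LinearMap.proj 0 : (Fin 2 → F) →ₗ[F] F) - LinearMap.proj 1) := by
          rw [Submodule.span_le]
          rintro _ ⟨i, rfl⟩
          simp [LinearMap.mem_ker, heq i]
        rw [hspan, top_le_iff] at hle
        have h10 : (![1, 0] : Fin 2 → F) ∈
            LinearMap.ker ((LinearMap.proj 0 : (Fin 2 → F) →ₗ[F] F) - LinearMap.proj 1) :=
          hle.symm ▸ Submodule.mem_top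
        simp [LinearMap.mem_ker] at h10
      · intro i hi
        rw [hmv i, hdiag i hi, sub_self]
    · rw [Finset.mem_filter]
      refine ⟨Finset.mem_univ _, ?_⟩
      rw [Matrix.mulVec_mulVec, hPA, Matrix.zero_mulVec]
  -- Step 2: count
  have key : (Finset.univ.filter fun P : Matrix (Fin (2 * n / 3)) (Fin n) F =>
        ∃ A : Matrix (Fin n) (Fin 2) F,
          P * A = 0 ∧
          Submodule.span F (Set.range fun i : Fin n => A i) = ⊤ ∧
          ∀ i : Fin n, n / 2 ≤ (i : ℕ) → A i 0 = A i 1).card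
      ≤ q ^ (3 * k + 4 * k * (6 * k - 1)) := by
    have hUcard : U.card ≤ q ^ (3 * k) := by
      calc U.card ≤ (Finset.univ.filter
            (fun u : Fin n → F => ∀ i : Fin n, n / 2 ≤ (i : ℕ) → u i = 0)).card := by
            apply Finset.card_le_card
            intro u hu
            rw [hUdef, Finset.mem_filter] at hu
            rw [Finset.mem_filter]
            exact ⟨hu.1, hu.2.2⟩
        _ ≤ Fintype.card F ^ (n / 2) := usub_card (Nat.div_le_self n 2)
        _ = q ^ (3 * k) := by rw [hq, hn2]
    calc (Finset.univ.filter fun P : Matrix (Fin (2 * n / 3)) (Fin n) F =>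
          ∃ A : Matrix (Fin n) (Fin 2) F,
            P * A = 0 ∧
            Submodule.span F (Set.range fun i : Fin n => A i) = ⊤ ∧
            ∀ i : Fin n, n / 2 ≤ (i : ℕ) → A i 0 = A i 1).card
        ≤ (U.biUnion (fun u => Finset.univ.filter
            fun P : Matrix (Fin (2 * n / 3)) (Fin n) F => P.mulVec u = 0)).card :=
          Finset.card_le_card hsub
      _ ≤ ∑ u ∈ U, (Finset.univ.filter
            fun P : Matrix (Fin (2 * n / 3)) (Fin n) F => P.mulVec u = 0).card :=
          Finset.card_biUnion_le
      _ ≤ ∑ _u ∈ U, Fintype.card F ^ ((2 * n / 3) * (n - 1)) := by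
          apply Finset.sum_le_sum
          intro u hu
          rw [hUdef, Finset.mem_filter] at hu
          exact matcount u hu.2.1
      _ = U.card * Fintype.card F ^ ((2 * n / 3) * (n - 1)) := by
          rw [Finset.sum_const, smul_eq_mul]
      _ ≤ q ^ (3 * k) * q ^ (4 * k * (6 * k - 1)) := by
          apply Nat.mul_le_mul hUcard
          rw [hq, hm]
          apply Nat.pow_le_pow_right (by omega)
          apply Nat.mul_le_mul_left
          omega
      _ = q ^ (3 * k + 4 * k * (6 * k - 1)) := (pow_add q _ _).symm
  -- Step 3: assemble over ℝ
  have hcardM : Fintype.card (Matrix (Fin (2 * n / 3)) (Fin n) F) = q ^ (24 * k ^ 2) := by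
    calc Fintype.card (Matrix (Fin (2 * n / 3)) (Fin n) F)
        = Fintype.card (Fin (2 * n / 3) → Fin n → F) := Fintype.card_congr Matrix.of.symm
      _ = (Fintype.card F ^ n) ^ (2 * n / 3) := by
          rw [Fintype.card_fun, Fintype.card_fun, Fintype.card_fin, Fintype.card_fin]
      _ = q ^ (24 * k ^ 2) := by rw [hq, ← pow_mul, hm, hk]; ring_nf
  rw [hcardM, hn6, div_le_iff₀ (by positivity)]
  have hexp : ((3 * k + 4 * k * (6 * k - 1) : ℕ) : ℤ) = 24 * (k : ℤ) ^ 2 - k := by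
    rw [Nat.cast_add, Nat.cast_mul, Nat.cast_mul, Nat.cast_sub h6k]
    push_cast
    ring
  calc ((Finset.univ.filter fun P : Matrix (Fin (2 * n / 3)) (Fin n) F =>
          ∃ A : Matrix (Fin n) (Fin 2) F,
            P * A = 0 ∧
            Submodule.span F (Set.range fun i : Fin n => A i) = ⊤ ∧
            ∀ i : Fin n, n / 2 ≤ (i : ℕ) → A i 0 = A i 1).card : ℝ)
      ≤ (q : ℝ) ^ (3 * k + 4 * k * (6 * k - 1)) := by exact_mod_cast key
    _ = (q : ℝ) ^ (((3 * k + 4 * k * (6 * k - 1) : ℕ) : ℤ)) := (zpow_natCast _ _).symm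
    _ = (q : ℝ) ^ (24 * (k : ℤ) ^ 2 - k) := by rw [hexp]
    _ = (q : ℝ) ^ (-(k : ℤ)) * (q : ℝ) ^ ((24 * k ^ 2 : ℕ) : ℤ) := by
        rw [← zpow_add₀ (ne_of_gt hq0)]
        congr 1
        push_cast
        ring
    _ = (q : ℝ) ^ (-(k : ℤ)) * ((q ^ (24 * k ^ 2) : ℕ) : ℝ) := by
        rw [zpow_natCast]
        push_cast
        ring
end

section
/- For all real numbers $\rho'$ with $0 \leq \rho' \leq L/(L+1)$ and integers $0 \leq d \leq L+1$, writing $L' = L + 1 - d$, one has $\left(\frac{d}{L+1}\right)^{(1-\rho')(L+1)} \leq 1 - \frac{L' \rho'}{L+1}$. -/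
theorem stmt13 (L d : ℕ) (hL : 1 ≤ L) (hd : d ≤ L + 1) (ρ : ℝ)
    (h0 : 0 ≤ ρ) (h1 : ρ ≤ (L : ℝ) / ((L : ℝ) + 1)) :
    ((d : ℝ) / ((L : ℝ) + 1)) ^ ((1 - ρ) * ((L : ℝ) + 1)) ≤
      1 - (((L : ℝ) + 1 - (d : ℝ)) * ρ) / ((L : ℝ) + 1) := by
  have hLpos : (0:ℝ) < (L : ℝ) + 1 := by positivity
  have hρ1 : ρ ≤ 1 := h1.trans (by
    rw [div_le_one hLpos]; linarith)
  have he1 : (1:ℝ) ≤ (1 - ρ) * ((L : ℝ) + 1) := by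
    have : ρ * ((L:ℝ) + 1) ≤ (L:ℝ) := (le_div_iff₀ hLpos).mp h1
    nlinarith
  have hx0 : (0:ℝ) ≤ (d : ℝ) / ((L : ℝ) + 1) := by positivity
  have hdL : (d:ℝ) ≤ (L:ℝ) + 1 := by exact_mod_cast hd
  have hx1 : (d : ℝ) / ((L : ℝ) + 1) ≤ 1 := by
    rw [div_le_one hLpos]; exact hdL
  have key : ((d : ℝ) / ((L : ℝ) + 1)) ^ ((1 - ρ) * ((L : ℝ) + 1)) ≤
      (d : ℝ) / ((L : ℝ) + 1) := by
    rcases eq_or_lt_of_le hx0 with h | h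
    · rw [← h, Real.zero_rpow (by linarith : (1 - ρ) * ((L : ℝ) + 1) ≠ 0)]
    · calc ((d : ℝ) / ((L : ℝ) + 1)) ^ ((1 - ρ) * ((L : ℝ) + 1))
          ≤ ((d : ℝ) / ((L : ℝ) + 1)) ^ (1:ℝ) :=
            Real.rpow_le_rpow_of_exponent_ge h hx1 he1
        _ = (d : ℝ) / ((L : ℝ) + 1) := Real.rpow_one _
  refine key.trans ?_
  rw [div_le_iff₀ hLpos, sub_mul, div_mul_cancel₀ _ (ne_of_gt hLpos)]
  nlinarith
end
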